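/- Let ϖ₂(z) = log²z + 2·ϖ̃₁(z)·log z + ϖ̃₂(z) for real z ∈ (0, 1/27), where ϖ̃₁(z) = ∑_{j≥1} 3·(3j−1)!/(j!)³·(−z)^j and ϖ̃₂(z) = ∑_{j≥1} 18·(3j−1)!/(j!)³·(H_{3j−1} − H_j)·(−z)^j with H_k the k-th harmonic number, and let θ denote the differential operator θf(z) = z·f′(z). Then ϖ₂ satisfies the Picard–Fuchs equation θ³ϖ₂(z) + 3z·(3θ+2)(3θ+1)θ ϖ₂(z) = 0 for all z ∈ (0, 1/27). -/

import Mathlib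

open Real

/-- The `k`-th harmonic number `H_k = ∑_{i=1}^k 1/i`. -/
noncomputable def harmonicNum (k : ℕ) : ℝ := ∑ i ∈ Finset.range k, (1 : ℝ) / (i + 1)

/-- The coefficients `c_j = 3 (3j-1)! / (j!)^3` of the logarithmic period of local P². -/
noncomputable def localP2c (j : ℕ) : ℝ :=
  3 * (Nat.factorial (3 * j - 1) : ℝ) / ((Nat.factorial j : ℝ)) ^ 3

/-- The coefficients `d_j = 18 (3j-1)! / (j!)^3 (H_{3j-1} - H_j)`. -/
noncomputable def localP2d (j : ℕ) : ℝ :=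
  18 * (Nat.factorial (3 * j - 1) : ℝ) / ((Nat.factorial j : ℝ)) ^ 3 *
    (harmonicNum (3 * j - 1) - harmonicNum j)

/-- The power-series part `ϖ̃₁(z) = ∑_{j ≥ 1} c_j (-z)^j` of the logarithmic period. -/
noncomputable def w1tilde (z : ℝ) : ℝ := ∑' j : ℕ, localP2c (j + 1) * (-z) ^ (j + 1)

/-- The power-series part `ϖ̃₂(z) = ∑_{j ≥ 1} d_j (-z)^j` of the double-logarithmic
period. -/
noncomputable def w2tilde (z : ℝ) : ℝ := ∑' j : ℕ, localP2d (j + 1) * (-z) ^ (j + 1)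

/-- The double-logarithmic period `ϖ₂(z) = log² z + 2 ϖ̃₁(z) log z + ϖ̃₂(z)`. -/
noncomputable def w2 (z : ℝ) : ℝ :=
  (Real.log z) ^ 2 + 2 * w1tilde z * Real.log z + w2tilde z

/-- The operator `θ = z d/dz`. -/
noncomputable def theta (f : ℝ → ℝ) : ℝ → ℝ := fun z => z * deriv f z

/-- `(3θ+1)θ` applied to `ϖ₂`. -/
noncomputable def pf1 : ℝ → ℝ := fun z => 3 * theta (theta w2) z + theta w2 z

/-- `(3θ+2)(3θ+1)θ` applied to `ϖ₂`. -/
noncomputable def pf2 : ℝ → ℝ := fun z => 3 * theta pf1 z + 2 * pf1 z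

open Finset

/-!
Write `ϖ₂ = ∑_{k ≤ 2} Pₖ(z) logᵏ z` with power series `Pₖ` converging for `|z| < 1/27`.
On such expressions `θ` and multiplication by `z` act on the coefficient arrays only:
`θ (zⁿ logᵏ z) = n zⁿ logᵏ z + k zⁿ logᵏ⁻¹ z`, and `z` shifts `n`. So the Picard–Fuchs
expression is again of this form, with coefficients that are finite combinations of the `c_n`
and `d_n`. They vanish by the recurrence `(n+1)³ c_{n+1} = 3n(3n+1)(3n+2) c_n` and its companion
for `d_n`, which follows because `(H_{3n+2} - H_{n+1}) - (H_{3n-1} - H_n)` is a third of the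
logarithmic derivative in `n` of the ratio `3n(3n+1)(3n+2)/(n+1)³`. At `n = 1` the `log z` and
`log² z` terms of `ϖ₂` contribute as well; they are cancelled because `c₁ = 6` and `d₁ = 18`.
-/

noncomputable def powerSum (a : ℕ → ℝ) (z : ℝ) : ℝ := ∑' n, a n * z ^ n

def RadiusGE (a : ℕ → ℝ) (R : ℝ) : Prop :=
  ∀ r, 0 ≤ r → r < R → Summable fun n => |a n| * r ^ n

noncomputable def thetaCoeff (a : ℕ → ℝ) (n : ℕ) : ℝ := n * a n

noncomputable def shiftCoeff (a : ℕ → ℝ) : ℕ → ℝ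
  | 0 => 0
  | n + 1 => a n

namespace RadiusGE

variable {a b : ℕ → ℝ} {R : ℝ}

theorem of_bound {C : ℝ} (h : ∀ n, |a n| * R ^ n ≤ C) : RadiusGE a R := by
  intro r hr hrR
  have hR : 0 < R := hr.trans_lt hrR
  refine .of_nonneg_of_le (fun n => by positivity) (fun n => ?_)
    ((summable_geometric_of_lt_one (by positivity) ((div_lt_one hR).2 hrR)).mul_left C)
  calc |a n| * r ^ n = |a n| * R ^ n * (r / R) ^ n := by
        rw [div_pow, mul_assoc, mul_div_cancel₀ _ (by positivity)]
    _ ≤ C * (r / R) ^ n := by gcongr; exact h n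

theorem of_abs_le_mul {C : ℝ} (hb : RadiusGE b R) (h : ∀ n, |a n| ≤ C * |b n|) :
    RadiusGE a R := fun r hr hrR =>
  .of_nonneg_of_le (fun n => by positivity)
    (fun n => by rw [← mul_assoc]; gcongr; exact h n) ((hb r hr hrR).mul_left C)

theorem const_smul (c : ℝ) (ha : RadiusGE a R) : RadiusGE (c • a) R :=
  ha.of_abs_le_mul fun n => (abs_mul c (a n)).le

theorem add (ha : RadiusGE a R) (hb : RadiusGE b R) : RadiusGE (a + b) R := fun r hr hrR =>
  .of_nonneg_of_le (fun n => by positivity)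
    (fun n => by rw [← add_mul]; gcongr; exact abs_add_le _ _) ((ha r hr hrR).add (hb r hr hrR))

theorem shiftCoeff (ha : RadiusGE a R) : RadiusGE (shiftCoeff a) R := fun r hr hrR => by
  rw [← summable_nat_add_iff 1]
  exact ((ha r hr hrR).mul_left r).congr fun n => by simp only [_root_.shiftCoeff]; ring

theorem thetaCoeff (ha : RadiusGE a R) : RadiusGE (thetaCoeff a) R := by
  intro r hr hrR
  obtain ⟨r', hrr', hr'R⟩ := exists_between hrR
  have hr' : 0 < r' := hr.trans_lt hrr'
  have hq : ‖r / r'‖ < 1 := by rwa [Real.norm_of_nonneg (by positivity), div_lt_one hr']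
  have hsum := ha r' hr'.le hr'R
  have hbound : ∀ n, |a n| * r' ^ n ≤ ∑' m, |a m| * r' ^ m :=
    fun n => hsum.le_tsum n fun m _ => by positivity
  refine .of_nonneg_of_le (fun n => by positivity) (fun n => ?_)
    ((summable_pow_mul_geometric_of_norm_lt_one 1 hq).mul_left (∑' m, |a m| * r' ^ m))
  calc |_root_.thetaCoeff a n| * r ^ n = (n : ℝ) ^ 1 * (r / r') ^ n * (|a n| * r' ^ n) := by
        rw [_root_.thetaCoeff, abs_mul, Nat.abs_cast, div_pow, pow_one]
        field_simp
    _ ≤ (n : ℝ) ^ 1 * (r / r') ^ n * ∑' m, |a m| * r' ^ m := by gcongr; exact hbound n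
    _ = _ := by ring

theorem summable (ha : RadiusGE a R) {z : ℝ} (hz : |z| < R) : Summable fun n => a n * z ^ n :=
  .of_norm <| (ha |z| (abs_nonneg z) hz).congr fun n => by simp

end RadiusGE

theorem tsum_eq_tsum_succ_of_eq_zero {M : Type*} [AddCommMonoid M] [TopologicalSpace M]
    {f : ℕ → M} (hf : f 0 = 0) : ∑' n, f n = ∑' n, f (n + 1) :=
  (tsum_pnat_eq_tsum_of_eq_zero hf).symm.trans tsum_pnat_eq_tsum_succ

section PowerSum

variable {a b : ℕ → ℝ} {R z : ℝ}

theorem powerSum_zero (z : ℝ) : powerSum 0 z = 0 := by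
  simp [powerSum]

theorem powerSum_single_zero (c z : ℝ) : powerSum (Pi.single 0 c) z = c := by
  rw [powerSum, tsum_eq_single 0 fun n hn => by simp [hn]]
  simp

theorem powerSum_add (ha : RadiusGE a R) (hb : RadiusGE b R) (hz : |z| < R) :
    powerSum (a + b) z = powerSum a z + powerSum b z := by
  simp only [powerSum, Pi.add_apply, add_mul]
  exact (ha.summable hz).tsum_add (hb.summable hz)

theorem powerSum_const_smul (c : ℝ) (a : ℕ → ℝ) (z : ℝ) :
    powerSum (c • a) z = c * powerSum a z := by
  simp only [powerSum, Pi.smul_apply, smul_eq_mul, mul_assoc, tsum_mul_left]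

theorem powerSum_shiftCoeff (a : ℕ → ℝ) (z : ℝ) :
    powerSum (shiftCoeff a) z = z * powerSum a z := by
  rw [powerSum, tsum_eq_tsum_succ_of_eq_zero (by simp [shiftCoeff]), powerSum, ← tsum_mul_left]
  exact tsum_congr fun n => by simp only [shiftCoeff]; ring

theorem hasDerivAt_powerSum (ha : RadiusGE a R) (hz : |z| < R) :
    HasDerivAt (powerSum a) (∑' n, a n * (n * z ^ (n - 1))) z := by
  obtain ⟨r, hzr, hrR⟩ := exists_between hz
  have hr : 0 < r := (abs_nonneg z).trans_lt hzr
  have hsum : Summable fun n => |thetaCoeff a n| * r ^ n / r :=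
    (ha.thetaCoeff r hr.le hrR).div_const r
  replace hzr : z ∈ Set.Ioo (-r) r := abs_lt.1 hzr
  refine hasDerivAt_tsum_of_isPreconnected hsum isOpen_Ioo isPreconnected_Ioo
    (fun n y _ => (hasDerivAt_pow n y).const_mul (a n)) (fun n y hy => ?_) hzr
    (ha.summable hz) hzr
  have hy : |y| ≤ r := (abs_lt.2 hy).le
  rcases n with _ | n
  · simp [thetaCoeff]
  · calc ‖a (n + 1) * ((n + 1 : ℕ) * y ^ (n + 1 - 1))‖ = |a (n + 1)| * (n + 1) * |y| ^ n := by
          simp only [Nat.add_sub_cancel, norm_mul, norm_pow, Real.norm_eq_abs, Nat.abs_cast]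
          push_cast; ring
      _ ≤ |a (n + 1)| * (n + 1) * r ^ n := by gcongr
      _ = |thetaCoeff a (n + 1)| * r ^ (n + 1) / r := by
          rw [thetaCoeff, abs_mul, Nat.abs_cast, pow_succ]; field_simp; push_cast; ring

theorem mul_tsum_deriv_eq_powerSum_thetaCoeff (a : ℕ → ℝ) (z : ℝ) :
    z * ∑' n, a n * (n * z ^ (n - 1)) = powerSum (thetaCoeff a) z := by
  rw [← tsum_mul_left, powerSum]
  refine tsum_congr fun n => ?_
  rcases n with _ | n
  · simp [thetaCoeff]
  · simp only [thetaCoeff, Nat.add_sub_cancel, pow_succ]; ring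

end PowerSum

/-- `A k n` is the coefficient of `zⁿ logᵏ z`. -/
noncomputable def logSeries (K : ℕ) (A : ℕ → ℕ → ℝ) (z : ℝ) : ℝ :=
  ∑ k ∈ range K, powerSum (A k) z * Real.log z ^ k

noncomputable def thetaLogCoeffs (A : ℕ → ℕ → ℝ) (k : ℕ) : ℕ → ℝ :=
  thetaCoeff (A k) + ((k : ℝ) + 1) • A (k + 1)

structure IsLogCoeffs (K : ℕ) (R : ℝ) (A : ℕ → ℕ → ℝ) : Prop where
  radiusGE : ∀ k, RadiusGE (A k) R
  -- `thetaLogCoeffs A (K - 1)` reads `A K`, which `logSeries K A` ignores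
  eq_zero : ∀ k, K ≤ k → A k = 0

namespace IsLogCoeffs

variable {K : ℕ} {R : ℝ} {A B : ℕ → ℕ → ℝ}

theorem add (hA : IsLogCoeffs K R A) (hB : IsLogCoeffs K R B) : IsLogCoeffs K R (A + B) :=
  ⟨fun k => (hA.radiusGE k).add (hB.radiusGE k), fun k hk => by
    simp [hA.eq_zero k hk, hB.eq_zero k hk]⟩

theorem const_smul (c : ℝ) (hA : IsLogCoeffs K R A) : IsLogCoeffs K R (c • A) :=
  ⟨fun k => (hA.radiusGE k).const_smul c, fun k hk => by simp [hA.eq_zero k hk]⟩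

theorem shiftCoeff (hA : IsLogCoeffs K R A) : IsLogCoeffs K R fun k => shiftCoeff (A k) :=
  ⟨fun k => (hA.radiusGE k).shiftCoeff, fun k hk => by
    ext (_ | n) <;> simp [_root_.shiftCoeff, hA.eq_zero k hk]⟩

theorem thetaLogCoeffs (hA : IsLogCoeffs K R A) : IsLogCoeffs K R (thetaLogCoeffs A) :=
  ⟨fun k => (hA.radiusGE k).thetaCoeff.add ((hA.radiusGE (k + 1)).const_smul _), fun k hk => by
    ext n
    simp [_root_.thetaLogCoeffs, thetaCoeff, hA.eq_zero k hk, hA.eq_zero (k + 1) (by omega)]⟩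

end IsLogCoeffs

theorem abs_lt_of_mem_Ioo_zero {z R : ℝ} (hz : z ∈ Set.Ioo 0 R) : |z| < R := by
  rw [abs_of_pos hz.1]; exact hz.2

section LogSeries

variable {K : ℕ} {R z : ℝ} {A B : ℕ → ℕ → ℝ}

theorem logSeries_add (hA : ∀ k, RadiusGE (A k) R) (hB : ∀ k, RadiusGE (B k) R) (hz : |z| < R) :
    logSeries K (A + B) z = logSeries K A z + logSeries K B z := by
  simp only [logSeries, Pi.add_apply, powerSum_add (hA _) (hB _) hz, add_mul, sum_add_distrib]

theorem logSeries_const_smul (c : ℝ) (K : ℕ) (A : ℕ → ℕ → ℝ) (z : ℝ) :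
    logSeries K (c • A) z = c * logSeries K A z := by
  simp only [logSeries, Pi.smul_apply, powerSum_const_smul, mul_assoc, mul_sum]

theorem logSeries_shiftCoeff (K : ℕ) (A : ℕ → ℕ → ℝ) (z : ℝ) :
    logSeries K (fun k => shiftCoeff (A k)) z = z * logSeries K A z := by
  simp only [logSeries, powerSum_shiftCoeff, mul_assoc, mul_sum]

theorem logSeries_zero (K : ℕ) (z : ℝ) : logSeries K 0 z = 0 := by
  simp [logSeries, powerSum_zero]

theorem sum_range_mul_pow_pred_eq {f : ℕ → ℝ} (hf : f K = 0) (x : ℝ) :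
    ∑ k ∈ range K, f k * (k * x ^ (k - 1)) = ∑ k ∈ range K, ((k : ℝ) + 1) * f (k + 1) * x ^ k := by
  cases K with
  | zero => simp
  | succ K =>
    rw [sum_range_succ', sum_range_succ, hf]
    simp only [Nat.cast_add, Nat.cast_one, Nat.add_sub_cancel, CharP.cast_eq_zero, zero_mul,
      mul_zero, add_zero]
    exact sum_congr rfl fun k _ => by ring

theorem hasDerivAt_logSeries (hA : IsLogCoeffs K R A) (hz : z ∈ Set.Ioo 0 R) :
    HasDerivAt (logSeries K A) (logSeries K (thetaLogCoeffs A) z / z) z := by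
  have hz0 : z ≠ 0 := hz.1.ne'
  have habs := abs_lt_of_mem_Ioo_zero hz
  have hterm : ∀ k ∈ range K, HasDerivAt (fun w => powerSum (A k) w * Real.log w ^ k)
      ((∑' n, A k n * (n * z ^ (n - 1))) * Real.log z ^ k +
        powerSum (A k) z * (k * Real.log z ^ (k - 1) * z⁻¹)) z := fun k _ =>
    (hasDerivAt_powerSum (hA.radiusGE k) habs).mul ((Real.hasDerivAt_log hz0).pow k)
  have hθ : ∀ k, powerSum (thetaLogCoeffs A k) z =
      z * ∑' n, A k n * (n * z ^ (n - 1)) + ((k : ℝ) + 1) * powerSum (A (k + 1)) z := fun k => by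
    rw [thetaLogCoeffs, powerSum_add (hA.radiusGE k).thetaCoeff
      ((hA.radiusGE (k + 1)).const_smul _) habs, powerSum_const_smul,
      mul_tsum_deriv_eq_powerSum_thetaCoeff]
  have hshift := sum_range_mul_pow_pred_eq (f := fun k => powerSum (A k) z)
    (show powerSum (A K) z = 0 by rw [hA.eq_zero K le_rfl, powerSum_zero]) (Real.log z)
  refine (HasDerivAt.fun_sum hterm).congr_deriv ?_
  rw [eq_div_iff hz0, logSeries]
  simp only [hθ, add_mul (z * _), sum_add_distrib, ← hshift]
  rw [add_mul, sum_mul, sum_mul]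
  congr 1
  · exact sum_congr rfl fun k _ => by ring
  · exact sum_congr rfl fun k _ => by field_simp

theorem theta_eqOn_logSeries {f : ℝ → ℝ} (hA : IsLogCoeffs K R A)
    (hf : Set.EqOn f (logSeries K A) (Set.Ioo 0 R)) :
    Set.EqOn (theta f) (logSeries K (thetaLogCoeffs A)) (Set.Ioo 0 R) := fun z hz => by
  rw [theta, (hf.eventuallyEq_of_mem (isOpen_Ioo.mem_nhds hz)).deriv_eq,
    (hasDerivAt_logSeries hA hz).deriv, mul_div_cancel₀ _ hz.1.ne']

end LogSeries

theorem harmonicNum_nonneg (k : ℕ) : 0 ≤ harmonicNum k :=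
  sum_nonneg fun i _ => by positivity

theorem harmonicNum_le (k : ℕ) : harmonicNum k ≤ k := by
  calc harmonicNum k ≤ ∑ _i ∈ range k, (1 : ℝ) :=
        sum_le_sum fun i _ =>
          div_le_one_of_le₀ (by linarith [i.cast_nonneg (α := ℝ)]) (by positivity)
    _ = k := by simp

theorem harmonicNum_succ (k : ℕ) : harmonicNum (k + 1) = harmonicNum k + 1 / ((k : ℝ) + 1) :=
  sum_range_succ _ k

theorem localP2c_nonneg (n : ℕ) : 0 ≤ localP2c n := by
  unfold localP2c; positivity

theorem localP2c_one : localP2c 1 = 6 := by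
  norm_num [localP2c, Nat.factorial]

theorem localP2d_one : localP2d 1 = 18 := by
  norm_num [localP2d, harmonicNum, Nat.factorial, sum_range_succ]

theorem localP2d_eq (n : ℕ) :
    localP2d n = 6 * localP2c n * (harmonicNum (3 * n - 1) - harmonicNum n) := by
  unfold localP2d localP2c; ring

theorem localP2c_succ {n : ℕ} (hn : n ≠ 0) :
    ((n : ℝ) + 1) ^ 3 * localP2c (n + 1) = 3 * n * (3 * n + 1) * (3 * n + 2) * localP2c n := by
  obtain ⟨m, rfl⟩ := Nat.exists_eq_add_one_of_ne_zero hn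
  rw [localP2c, localP2c, show 3 * (m + 1 + 1) - 1 = 3 * m + 2 + 3 by omega,
    show 3 * (m + 1) - 1 = 3 * m + 2 by omega]
  simp only [Nat.factorial_succ]
  push_cast
  field_simp
  ring

theorem localP2c_succ_le (n : ℕ) : localP2c (n + 1) ≤ 6 * 27 ^ n := by
  induction n with
  | zero => simp [localP2c_one]
  | succ n ih =>
    have hrec := localP2c_succ n.succ_ne_zero
    push_cast at hrec
    have hstep : localP2c (n + 2) ≤ 27 * localP2c (n + 1) := by
      refine le_of_mul_le_mul_left ?_ (by positivity : (0 : ℝ) < ((n : ℝ) + 1 + 1) ^ 3)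
      have hpoly : 3 * ((n : ℝ) + 1) * (3 * (n + 1) + 1) * (3 * (n + 1) + 2) ≤
          27 * ((n : ℝ) + 1 + 1) ^ 3 := by
        nlinarith [n.cast_nonneg (α := ℝ)]
      rw [hrec]
      nlinarith [localP2c_nonneg (n + 1)]
    calc localP2c (n + 2) ≤ 27 * (6 * 27 ^ n) := by linarith
      _ = 6 * 27 ^ (n + 1) := by ring

theorem abs_localP2d_le (n : ℕ) : |localP2d n| ≤ 24 * n * localP2c n := by
  have hc := localP2c_nonneg n
  have h3n : ((3 * n - 1 : ℕ) : ℝ) ≤ 3 * n := by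
    exact_mod_cast (Nat.sub_le _ _)
  calc |localP2d n| = 6 * localP2c n * |harmonicNum (3 * n - 1) - harmonicNum n| := by
        rw [localP2d_eq, abs_mul, abs_of_nonneg (by positivity)]
    _ ≤ 6 * localP2c n * (harmonicNum (3 * n - 1) + harmonicNum n) := by
        gcongr
        simpa [abs_of_nonneg (harmonicNum_nonneg _)] using
          abs_sub (harmonicNum (3 * n - 1)) (harmonicNum n)
    _ ≤ 6 * localP2c n * (3 * n + n) := by
        gcongr
        exacts [(harmonicNum_le _).trans h3n, harmonicNum_le n]
    _ = 24 * n * localP2c n := by ring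

theorem harmonicNum_sub_succ {n : ℕ} (hn : n ≠ 0) :
    harmonicNum (3 * (n + 1) - 1) - harmonicNum (n + 1) = harmonicNum (3 * n - 1) - harmonicNum n +
      (1 / (3 * n) + 1 / (3 * n + 1) + 1 / (3 * n + 2) - 1 / ((n : ℝ) + 1)) := by
  obtain ⟨m, rfl⟩ := Nat.exists_eq_add_one_of_ne_zero hn
  rw [show 3 * (m + 1 + 1) - 1 = 3 * m + 2 + 1 + 1 + 1 by omega,
    show 3 * (m + 1) - 1 = 3 * m + 2 by omega]
  simp only [harmonicNum_succ]
  push_cast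
  ring

theorem localP2d_succ {n : ℕ} (hn : n ≠ 0) :
    ((n : ℝ) + 1) ^ 3 * localP2d (n + 1) + 6 * ((n : ℝ) + 1) ^ 2 * localP2c (n + 1) =
      3 * n * (3 * n + 1) * (3 * n + 2) * localP2d n +
        6 * (27 * n ^ 2 + 18 * n + 2) * localP2c n := by
  have hn' : (n : ℝ) ≠ 0 := Nat.cast_ne_zero.2 hn
  rw [localP2d_eq, localP2d_eq, harmonicNum_sub_succ hn]
  linear_combination (norm := skip) 6 * (harmonicNum (3 * n - 1) - harmonicNum n +
    (1 / (3 * n) + 1 / (3 * n + 1) + 1 / (3 * n + 2))) * localP2c_succ hn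
  field_simp
  ring

/-- The coefficients of `∑_{j ≥ 1} f j (-z)ʲ`; index `0` is set to `0` rather than read from `f`,
since e.g. `localP2c 0 = 3` (as `3 * 0 - 1 = 0` in `ℕ`). -/
noncomputable def negCoeffs (f : ℕ → ℝ) : ℕ → ℝ
  | 0 => 0
  | n + 1 => (-1) ^ (n + 1) * f (n + 1)

theorem tsum_mul_neg_pow_eq_powerSum (f : ℕ → ℝ) (z : ℝ) :
    ∑' j, f (j + 1) * (-z) ^ (j + 1) = powerSum (negCoeffs f) z := by
  rw [powerSum, tsum_eq_tsum_succ_of_eq_zero (f := fun n => negCoeffs f n * z ^ n)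
    (by simp [negCoeffs])]
  exact tsum_congr fun j => by rw [negCoeffs, neg_pow z]; ring

theorem abs_negCoeffs_succ (f : ℕ → ℝ) (n : ℕ) : |negCoeffs f (n + 1)| = |f (n + 1)| := by
  simp [negCoeffs, abs_mul]

theorem radiusGE_negCoeffs_localP2c : RadiusGE (negCoeffs localP2c) (1 / 27) := by
  refine RadiusGE.of_bound (C := 6) fun n => ?_
  rcases n with _ | n
  · simp [negCoeffs]
  · rw [abs_negCoeffs_succ, abs_of_nonneg (localP2c_nonneg _)]
    calc localP2c (n + 1) * (1 / 27) ^ (n + 1) ≤ 6 * 27 ^ n * (1 / 27) ^ (n + 1) := by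
          gcongr; exact localP2c_succ_le n
      _ ≤ 6 := by rw [one_div_pow, pow_succ]; field_simp; norm_num

theorem radiusGE_negCoeffs_localP2d : RadiusGE (negCoeffs localP2d) (1 / 27) := by
  refine radiusGE_negCoeffs_localP2c.thetaCoeff.of_abs_le_mul (C := 24) fun n => ?_
  rcases n with _ | n
  · simp [negCoeffs]
  · rw [abs_negCoeffs_succ, thetaCoeff, abs_mul, abs_negCoeffs_succ, Nat.abs_cast,
      abs_of_nonneg (localP2c_nonneg _), ← mul_assoc]
    exact abs_localP2d_le _

noncomputable def w2LogCoeffs : ℕ → ℕ → ℝ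
  | 0 => negCoeffs localP2d
  | 1 => (2 : ℝ) • negCoeffs localP2c
  | 2 => Pi.single 0 1
  | _ + 3 => 0

noncomputable def pf1LogCoeffs : ℕ → ℕ → ℝ :=
  (3 : ℝ) • thetaLogCoeffs (thetaLogCoeffs w2LogCoeffs) + thetaLogCoeffs w2LogCoeffs

noncomputable def pf2LogCoeffs : ℕ → ℕ → ℝ :=
  (3 : ℝ) • thetaLogCoeffs pf1LogCoeffs + (2 : ℝ) • pf1LogCoeffs

theorem w2_eq_logSeries : w2 = logSeries 3 w2LogCoeffs := by
  ext z
  simp only [w2, logSeries, sum_range_succ, sum_range_zero, w2LogCoeffs, w1tilde, w2tilde,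
    tsum_mul_neg_pow_eq_powerSum, powerSum_const_smul, powerSum_single_zero]
  ring

theorem isLogCoeffs_w2LogCoeffs : IsLogCoeffs 3 (1 / 27) w2LogCoeffs where
  radiusGE
    | 0 => radiusGE_negCoeffs_localP2d
    | 1 => radiusGE_negCoeffs_localP2c.const_smul 2
    | 2 => RadiusGE.of_bound (C := 1) fun n => by rcases n with _ | n <;> simp [w2LogCoeffs]
    | _ + 3 => RadiusGE.of_bound (C := 0) fun n => by simp [w2LogCoeffs]
  eq_zero
    | _ + 3, _ => rfl

theorem isLogCoeffs_pf1LogCoeffs : IsLogCoeffs 3 (1 / 27) pf1LogCoeffs :=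
  (isLogCoeffs_w2LogCoeffs.thetaLogCoeffs.thetaLogCoeffs.const_smul 3).add
    isLogCoeffs_w2LogCoeffs.thetaLogCoeffs

theorem isLogCoeffs_pf2LogCoeffs : IsLogCoeffs 3 (1 / 27) pf2LogCoeffs :=
  (isLogCoeffs_pf1LogCoeffs.thetaLogCoeffs.const_smul 3).add (isLogCoeffs_pf1LogCoeffs.const_smul 2)

theorem theta_w2_eqOn : Set.EqOn (theta w2) (logSeries 3 (thetaLogCoeffs w2LogCoeffs))
    (Set.Ioo 0 (1 / 27)) :=
  theta_eqOn_logSeries isLogCoeffs_w2LogCoeffs fun z _ => congrFun w2_eq_logSeries z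

theorem theta_theta_w2_eqOn : Set.EqOn (theta (theta w2))
    (logSeries 3 (thetaLogCoeffs (thetaLogCoeffs w2LogCoeffs))) (Set.Ioo 0 (1 / 27)) :=
  theta_eqOn_logSeries isLogCoeffs_w2LogCoeffs.thetaLogCoeffs theta_w2_eqOn

theorem pf1_eqOn : Set.EqOn pf1 (logSeries 3 pf1LogCoeffs) (Set.Ioo 0 (1 / 27)) := fun z hz => by
  have hT := isLogCoeffs_w2LogCoeffs
  rw [pf1, theta_theta_w2_eqOn hz, theta_w2_eqOn hz, pf1LogCoeffs,
    logSeries_add (hT.thetaLogCoeffs.thetaLogCoeffs.const_smul 3).radiusGE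
      hT.thetaLogCoeffs.radiusGE (abs_lt_of_mem_Ioo_zero hz), logSeries_const_smul]

theorem pf2_eqOn : Set.EqOn pf2 (logSeries 3 pf2LogCoeffs) (Set.Ioo 0 (1 / 27)) := fun z hz => by
  have hP := isLogCoeffs_pf1LogCoeffs
  rw [pf2, theta_eqOn_logSeries hP pf1_eqOn hz, pf1_eqOn hz, pf2LogCoeffs,
    logSeries_add (hP.thetaLogCoeffs.const_smul 3).radiusGE (hP.const_smul 2).radiusGE
      (abs_lt_of_mem_Ioo_zero hz), logSeries_const_smul, logSeries_const_smul]

theorem w2LogCoeffs_picardFuchs :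
    thetaLogCoeffs (thetaLogCoeffs (thetaLogCoeffs w2LogCoeffs)) +
      (3 : ℝ) • (fun k => shiftCoeff (pf2LogCoeffs k)) = 0 := by
  ext k n
  rcases k with _ | _ | _ | k <;> rcases n with _ | _ | n <;>
    simp only [pf2LogCoeffs, pf1LogCoeffs, thetaLogCoeffs, thetaCoeff, shiftCoeff, w2LogCoeffs,
      negCoeffs, Pi.add_apply, Pi.smul_apply, smul_eq_mul, Pi.zero_apply, Pi.single_apply] <;>
    norm_num [localP2c_one, localP2d_one]
  -- what is left are the coefficients of `zⁿ⁺² log⁰ z` and `zⁿ⁺² log¹ z`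
  · have hd := localP2d_succ n.succ_ne_zero
    push_cast at hd
    linear_combination (-1) ^ (n + 2) * hd
  · have hc := localP2c_succ n.succ_ne_zero
    push_cast at hc
    linear_combination 2 * (-1) ^ (n + 2) * hc

theorem picard_fuchs_w2 :
    ∀ z ∈ Set.Ioo (0 : ℝ) (1 / 27),
      theta (theta (theta w2)) z + 3 * z * pf2 z = 0 := by
  intro z hz
  have hθ₃ := isLogCoeffs_w2LogCoeffs.thetaLogCoeffs.thetaLogCoeffs.thetaLogCoeffs
  have hshift := isLogCoeffs_pf2LogCoeffs.shiftCoeff.const_smul 3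
  rw [theta_eqOn_logSeries isLogCoeffs_w2LogCoeffs.thetaLogCoeffs.thetaLogCoeffs
      theta_theta_w2_eqOn hz, pf2_eqOn hz, mul_assoc, ← logSeries_shiftCoeff,
    ← logSeries_const_smul,
    ← logSeries_add hθ₃.radiusGE hshift.radiusGE (abs_lt_of_mem_Ioo_zero hz),
    w2LogCoeffs_picardFuchs, logSeries_zero]
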